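/- arXiv:1410.5040 — 2 statements merged into one kernel-verified Lean document; each statement's English description precedes it below -/
import Mathlib

section
/- The function r : (0,∞) → ℝ, where r(α) is the unique positive zero of f(ζ,α) = (1−ζ²)(α + ∫₀^ζ e^{−t²/2} dt) − ζ e^{−ζ²/2}, is strictly increasing in α, with derivative r'(α) = (1−r(α)²)² / (2 r(α)² exp(−r(α)²/2)) > 0. -/
/-!
On `0 < ζ < 1` the equation `f ζ α = 0` can be solved for `α`: it reads `α = alphaOf ζ`, with
`alphaOf ζ = ζ e^{-ζ²/2} / (1 - ζ²) - ∫₀^ζ e^{-t²/2} dt`, and every positive root of `f · α` with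
`α > 0` lies in `(0, 1)`. Hence `r` is the inverse of `alphaOf` on `(0, 1)`. A direct computation gives
`alphaOf' ζ = 2 ζ² e^{-ζ²/2} / (1 - ζ²)² > 0`, so `alphaOf` is strictly increasing, and the inverse
function theorem in one variable yields both the monotonicity of `r` and `r' = 1 / alphaOf' ∘ r`.
-/

noncomputable def f (ζ α : ℝ) : ℝ :=
  (1 - ζ ^ 2) * (α + ∫ t in (0:ℝ)..ζ, Real.exp (-t ^ 2 / 2)) - ζ * Real.exp (-ζ ^ 2 / 2)

open Real Set

noncomputable def alphaOf (ζ : ℝ) : ℝ :=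
  ζ * exp (-ζ ^ 2 / 2) / (1 - ζ ^ 2) - ∫ t in (0 : ℝ)..ζ, exp (-t ^ 2 / 2)

lemma continuous_exp_neg_sq_div_two : Continuous fun t : ℝ => exp (-t ^ 2 / 2) := by
  fun_prop

lemma hasDerivAt_integral_exp_neg_sq_div_two (ζ : ℝ) :
    HasDerivAt (fun z => ∫ t in (0 : ℝ)..z, exp (-t ^ 2 / 2)) (exp (-ζ ^ 2 / 2)) ζ :=
  intervalIntegral.integral_hasDerivAt_right
    (continuous_exp_neg_sq_div_two.intervalIntegrable _ _)
    continuous_exp_neg_sq_div_two.aestronglyMeasurable.stronglyMeasurableAtFilter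
    continuous_exp_neg_sq_div_two.continuousAt

lemma integral_exp_neg_sq_div_two_pos {ζ : ℝ} (hζ : 0 < ζ) :
    0 < ∫ t in (0 : ℝ)..ζ, exp (-t ^ 2 / 2) :=
  intervalIntegral.intervalIntegral_pos_of_pos
    (continuous_exp_neg_sq_div_two.intervalIntegrable _ _) (fun _ => exp_pos _) hζ

lemma hasDerivAt_alphaOf {ζ : ℝ} (hζ : 1 - ζ ^ 2 ≠ 0) :
    HasDerivAt alphaOf (2 * ζ ^ 2 * exp (-ζ ^ 2 / 2) / (1 - ζ ^ 2) ^ 2) ζ := by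
  have hexp : HasDerivAt (fun z : ℝ => exp (-z ^ 2 / 2)) (exp (-ζ ^ 2 / 2) * (-ζ)) ζ := by
    have hsq : HasDerivAt (fun z : ℝ => -z ^ 2 / 2) (-ζ) ζ := by
      exact ((hasDerivAt_pow 2 ζ).neg.div_const 2).congr_deriv (by ring)
    exact (hasDerivAt_exp _).comp ζ hsq
  have hden : HasDerivAt (fun z : ℝ => 1 - z ^ 2) (-(2 * ζ)) ζ := by
    simpa using (hasDerivAt_pow 2 ζ).const_sub 1
  have hnum : HasDerivAt (fun z : ℝ => z * exp (-z ^ 2 / 2))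
      (1 * exp (-ζ ^ 2 / 2) + ζ * (exp (-ζ ^ 2 / 2) * (-ζ))) ζ :=
    (hasDerivAt_id ζ).mul hexp
  refine ((hnum.div hden hζ).sub (hasDerivAt_integral_exp_neg_sq_div_two ζ)).congr_deriv ?_
  field_simp
  ring

lemma one_sub_sq_pos {ζ : ℝ} (hζ : ζ ∈ Ioo (0 : ℝ) 1) : 0 < 1 - ζ ^ 2 := by
  nlinarith [hζ.1, hζ.2]

lemma strictMonoOn_alphaOf : StrictMonoOn alphaOf (Ico 0 1) := by
  have hne : ∀ x ∈ Ico (0 : ℝ) 1, 1 - x ^ 2 ≠ 0 := fun x hx => by nlinarith [hx.1, hx.2]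
  refine strictMonoOn_of_deriv_pos (convex_Ico 0 1)
    (fun x hx => (hasDerivAt_alphaOf (hne x hx)).continuousAt.continuousWithinAt) fun x hx => ?_
  rw [interior_Ico] at hx
  have hpos := one_sub_sq_pos hx
  rw [(hasDerivAt_alphaOf hpos.ne').deriv]
  have := hx.1
  positivity

lemma alphaOf_pos {ζ : ℝ} (hζ : ζ ∈ Ioo (0 : ℝ) 1) : 0 < alphaOf ζ := by
  simpa [alphaOf] using
    strictMonoOn_alphaOf (left_mem_Ico.2 one_pos) (Ioo_subset_Ico_self hζ) hζ.1

lemma f_alphaOf {ζ : ℝ} (hζ : 1 - ζ ^ 2 ≠ 0) : f ζ (alphaOf ζ) = 0 := by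
  unfold f alphaOf
  field_simp
  ring

lemma mem_Ioo_and_alphaOf_eq_of_f_eq_zero {ζ α : ℝ} (hζ : 0 < ζ) (hα : 0 < α)
    (hf : f ζ α = 0) : ζ ∈ Ioo (0 : ℝ) 1 ∧ alphaOf ζ = α := by
  set I := ∫ t in (0 : ℝ)..ζ, exp (-t ^ 2 / 2)
  have hI : 0 < I := integral_exp_neg_sq_div_two_pos hζ
  have hroot : (1 - ζ ^ 2) * (α + I) = ζ * exp (-ζ ^ 2 / 2) := sub_eq_zero.1 hf
  have hpos : 0 < 1 - ζ ^ 2 := by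
    have := hroot ▸ mul_pos hζ (exp_pos (-ζ ^ 2 / 2))
    exact pos_of_mul_pos_left this (by linarith)
  refine ⟨⟨hζ, by nlinarith⟩, ?_⟩
  rw [alphaOf, ← hroot, mul_div_cancel_left₀ _ hpos.ne']
  ring

theorem stmt4 (r : ℝ → ℝ)
    (hr : ∀ α : ℝ, 0 < α → 0 < r α ∧ f (r α) α = 0 ∧ ∀ ζ : ℝ, 0 < ζ → f ζ α = 0 → ζ = r α) :
    StrictMonoOn r (Set.Ioi 0) ∧
    ∀ α : ℝ, 0 < α →
      HasDerivAt r ((1 - (r α) ^ 2) ^ 2 / (2 * (r α) ^ 2 * Real.exp (-(r α) ^ 2 / 2))) α ∧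
      0 < (1 - (r α) ^ 2) ^ 2 / (2 * (r α) ^ 2 * Real.exp (-(r α) ^ 2 / 2)) := by
  have hinv : ∀ α ∈ Ioi (0 : ℝ), r α ∈ Ioo (0 : ℝ) 1 ∧ alphaOf (r α) = α := fun α hα =>
    mem_Ioo_and_alphaOf_eq_of_f_eq_zero (hr α hα).1 hα (hr α hα).2.1
  have hmono : StrictMonoOn r (Ioi 0) := fun a ha b hb hab => by
    refine (strictMonoOn_alphaOf.lt_iff_lt (Ioo_subset_Ico_self (hinv a ha).1)
      (Ioo_subset_Ico_self (hinv b hb).1)).1 ?_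
    rwa [(hinv a ha).2, (hinv b hb).2]
  have himage : r '' Ioi 0 = Ioo 0 1 := by
    refine (image_subset_iff.2 fun α hα => mem_preimage.2 (hinv α hα).1).antisymm fun ζ hζ => ?_
    exact ⟨alphaOf ζ, alphaOf_pos hζ,
      ((hr _ (alphaOf_pos hζ)).2.2 ζ hζ.1 (f_alphaOf (one_sub_sq_pos hζ).ne')).symm⟩
  refine ⟨hmono, fun α hα => ?_⟩
  obtain ⟨hrα, -⟩ := hinv α hα
  have hr0 := hrα.1
  have hpos := one_sub_sq_pos hrα
  have hcont : ContinuousAt r α := hmono.continuousAt_of_image_mem_nhds (Ioi_mem_nhds hα)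
    (by rw [himage]; exact Ioo_mem_nhds hrα.1 hrα.2)
  have hleft : ∀ᶠ y in nhds α, alphaOf (r y) = y :=
    Filter.mem_of_superset (Ioi_mem_nhds hα) fun y hy => (hinv y hy).2
  refine ⟨?_, by positivity⟩
  simpa only [inv_div] using
    (hasDerivAt_alphaOf hpos.ne').of_local_left_inverse hcont (by positivity) hleft
end

section
/- Let h(ζ,α) = ζ·exp(−ζ²/2) / (α + ∫₀^ζ exp(−t²/2) dt) for ζ > 0, α ≥ 0. Then ∂h/∂ζ = exp(−ζ²/2)/(α + ∫₀^ζ e^{−t²/2} dt)² · f(ζ,α), where f(ζ,α) = (1−ζ²)(α + ∫₀^ζ e^{−t²/2} dt) − ζ e^{−ζ²/2}. In particular, h(·,α) is strictly decreasing on (r(α), ∞) and strictly increasing on (0, r(α)) when r(α) > 0, where r(α) is the unique nonnegative zero of f(·,α). -/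
noncomputable def hfun (ζ α : ℝ) : ℝ :=
  ζ * Real.exp (-ζ ^ 2 / 2) / (α + ∫ t in (0:ℝ)..ζ, Real.exp (-t ^ 2 / 2))

open Real Set

local notation "Φ " z:max => ∫ t in (0:ℝ)..z, Real.exp (-t ^ 2 / 2)

namespace Gaussian

lemma hasDerivAt_integral (ζ : ℝ) : HasDerivAt (fun z : ℝ => Φ z) (exp (-ζ ^ 2 / 2)) ζ :=
  (by fun_prop : Continuous fun t : ℝ => exp (-t ^ 2 / 2)).integral_hasStrictDerivAt 0 ζ |>.hasDerivAt

lemma integral_pos {ζ : ℝ} (hζ : 0 < ζ) : 0 < Φ ζ :=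
  intervalIntegral.intervalIntegral_pos_of_pos
    ((by fun_prop : Continuous fun t : ℝ => exp (-t ^ 2 / 2)).intervalIntegrable 0 ζ)
    (fun _ => exp_pos _) hζ

lemma add_integral_pos {α ζ : ℝ} (hα : 0 ≤ α) (hζ : 0 < ζ) : 0 < α + Φ ζ :=
  add_pos_of_nonneg_of_pos hα (integral_pos hζ)

lemma hasDerivAt_mul_exp (ζ : ℝ) :
    HasDerivAt (fun z : ℝ => z * exp (-z ^ 2 / 2)) ((1 - ζ ^ 2) * exp (-ζ ^ 2 / 2)) ζ := by
  have hexp : HasDerivAt (fun z : ℝ => exp (-z ^ 2 / 2)) (exp (-ζ ^ 2 / 2) * (-ζ)) ζ := by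
    refine HasDerivAt.exp (((hasDerivAt_pow 2 ζ).neg.div_const 2).congr_deriv ?_)
    ring
  refine ((hasDerivAt_id ζ).mul hexp).congr_deriv ?_
  simp only [id]
  ring

end Gaussian

open Gaussian

lemma hasDerivAt_f (α ζ : ℝ) : HasDerivAt (fun z => f z α) (-2 * ζ * (α + Φ ζ)) ζ := by
  have hsq : HasDerivAt (fun z : ℝ => 1 - z ^ 2) (-(2 * ζ ^ 1)) ζ :=
    (hasDerivAt_pow 2 ζ).const_sub 1
  refine ((hsq.mul ((hasDerivAt_integral ζ).const_add α)).sub (hasDerivAt_mul_exp ζ)).congr_deriv ?_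
  ring

lemma f_strictAntiOn {α : ℝ} (hα : 0 ≤ α) : StrictAntiOn (fun z => f z α) (Ici 0) := by
  refine strictAntiOn_of_hasDerivWithinAt_neg (convex_Ici 0)
    (fun z _ => (hasDerivAt_f α z).continuousAt.continuousWithinAt)
    (fun z _ => (hasDerivAt_f α z).hasDerivWithinAt) fun z hz => ?_
  rw [interior_Ici, mem_Ioi] at hz
  nlinarith [add_integral_pos hα hz]

lemma f_neg_of_root_lt {α r ζ : ℝ} (hα : 0 ≤ α) (hr : 0 ≤ r) (hrz : f r α = 0) (h : r < ζ) :
    f ζ α < 0 :=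
  hrz ▸ f_strictAntiOn hα (mem_Ici.2 hr) (mem_Ici.2 (hr.trans h.le)) h

lemma f_pos_of_lt_root {α r ζ : ℝ} (hα : 0 ≤ α) (hrz : f r α = 0) (hζ : 0 ≤ ζ) (h : ζ < r) :
    0 < f ζ α :=
  hrz ▸ f_strictAntiOn hα (mem_Ici.2 hζ) (mem_Ici.2 (hζ.trans h.le)) h

lemma hasDerivAt_hfun {α ζ : ℝ} (hD : α + Φ ζ ≠ 0) :
    HasDerivAt (fun z => hfun z α) (exp (-ζ ^ 2 / 2) / (α + Φ ζ) ^ 2 * f ζ α) ζ := by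
  refine ((hasDerivAt_mul_exp ζ).div ((hasDerivAt_integral ζ).const_add α) hD).congr_deriv ?_
  unfold f
  field_simp

section Monotonicity

variable {α : ℝ} {s : Set ℝ}

lemma hasDerivAt_hfun_of_pos (hα : 0 ≤ α) {ζ : ℝ} (hζ : 0 < ζ) :
    HasDerivAt (fun z => hfun z α) (exp (-ζ ^ 2 / 2) / (α + Φ ζ) ^ 2 * f ζ α) ζ :=
  hasDerivAt_hfun (add_integral_pos hα hζ).ne'

lemma hfun_deriv_weight_pos (hα : 0 ≤ α) {ζ : ℝ} (hζ : 0 < ζ) :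
    0 < exp (-ζ ^ 2 / 2) / (α + Φ ζ) ^ 2 :=
  div_pos (exp_pos _) (pow_pos (add_integral_pos hα hζ) 2)

lemma continuousOn_hfun (hα : 0 ≤ α) (hs : s ⊆ Ioi 0) : ContinuousOn (fun z => hfun z α) s :=
  fun _ hz => (hasDerivAt_hfun_of_pos hα (hs hz)).continuousAt.continuousWithinAt

lemma hfun_strictAntiOn (hα : 0 ≤ α) (hs : Convex ℝ s) (hs0 : s ⊆ Ioi 0)
    (hf : ∀ z ∈ interior s, f z α < 0) : StrictAntiOn (fun z => hfun z α) s :=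
  have hint : ∀ z ∈ interior s, 0 < z := fun _ hz => hs0 (interior_subset hz)
  strictAntiOn_of_hasDerivWithinAt_neg hs (continuousOn_hfun hα hs0)
    (fun _ hz => (hasDerivAt_hfun_of_pos hα (hint _ hz)).hasDerivWithinAt)
    fun _ hz => mul_neg_of_pos_of_neg (hfun_deriv_weight_pos hα (hint _ hz)) (hf _ hz)

lemma hfun_strictMonoOn (hα : 0 ≤ α) (hs : Convex ℝ s) (hs0 : s ⊆ Ioi 0)
    (hf : ∀ z ∈ interior s, 0 < f z α) : StrictMonoOn (fun z => hfun z α) s :=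
  have hint : ∀ z ∈ interior s, 0 < z := fun _ hz => hs0 (interior_subset hz)
  strictMonoOn_of_hasDerivWithinAt_pos hs (continuousOn_hfun hα hs0)
    (fun _ hz => (hasDerivAt_hfun_of_pos hα (hint _ hz)).hasDerivWithinAt)
    fun _ hz => mul_pos (hfun_deriv_weight_pos hα (hint _ hz)) (hf _ hz)

end Monotonicity

theorem stmt5 (α rα : ℝ) (hα : 0 ≤ α) (hr0 : 0 ≤ rα) (hrz : f rα α = 0) :
    (∀ ζ : ℝ, 0 < ζ → HasDerivAt (fun z => hfun z α)
        (Real.exp (-ζ ^ 2 / 2) / (α + ∫ t in (0:ℝ)..ζ, Real.exp (-t ^ 2 / 2)) ^ 2 * f ζ α) ζ) ∧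
    StrictAntiOn (fun z => hfun z α) (Set.Ioi rα) ∧
    (0 < rα → StrictMonoOn (fun z => hfun z α) (Set.Ioo 0 rα)) := by
  refine ⟨fun ζ hζ => hasDerivAt_hfun_of_pos hα hζ, ?_, fun _ => ?_⟩
  · refine hfun_strictAntiOn hα (convex_Ioi rα) (Ioi_subset_Ioi hr0) fun z hz => ?_
    exact f_neg_of_root_lt hα hr0 hrz (interior_subset hz)
  · refine hfun_strictMonoOn hα (convex_Ioo 0 rα) Ioo_subset_Ioi_self fun z hz => ?_
    rw [interior_Ioo] at hz
    exact f_pos_of_lt_root hα hrz hz.1.le hz.2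
end
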